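/- Let μ₂ > 0, μ₁ ∈ ℝ, ω ≠ 0, C₆ ≠ 0, and define f₂(k) = −ω·C₆·((ε(k)+μ₁)/(ε(k)+μ₂))·f₁(k). Assume Γ₁ := ∫ ε(k)|f₁(k)|² dk < ∞, assume the constraint 1 = −C₆·(1 − (μ₂−μ₁)·∫|f₁(k)|²/(ε(k)+μ₂) dk), and assume ∫|f₂(k)|² dk = 1. Then Γ₂ := ∫ ε(k)|f₂(k)|² dk is finite and Γ₂ = ω²·C₆·(C₆·(Γ₁+μ₁) + μ₂ − μ₁) − μ₂. -/

import Mathlib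

/-!
With `r = (ε + μ₁)/(ε + μ₂)` one has `|f₂|² = ω²C₆² r² |f₁|²`, and the pointwise identity
`ε r² = ε + (2μ₁ - μ₂) + (μ₁ - μ₂)²/(ε + μ₂) - μ₂ r²` expresses `Γ₂` through `Γ₁`,
`∫|f₁|² = 1`, `∫|f₁|²/(ε + μ₂)` and `∫|f₂|² = 1`. The constraint eliminates the middle
integral. Since `ε ≥ 0` and `μ₂ > 0`, both `1/(ε + μ₂)` and `r` are bounded, which gives every
integrability needed.
-/

open MeasureTheory

lemma abs_inv_add_le_inv {x c : ℝ} (hx : 0 ≤ x) (hc : 0 < c) : |(x + c)⁻¹| ≤ c⁻¹ := by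
  rw [abs_of_pos (by positivity)]
  exact inv_anti₀ hc (by linarith)

lemma abs_add_div_add_le {x b c : ℝ} (hx : 0 ≤ x) (hc : 0 < c) :
    |(x + b) / (x + c)| ≤ 1 + |b - c| * c⁻¹ := by
  have hxc : x + c ≠ 0 := by positivity
  have hsplit : (x + b) / (x + c) = 1 + (b - c) * (x + c)⁻¹ := by
    field_simp
    ring
  calc |(x + b) / (x + c)| ≤ |1| + |b - c| * |(x + c)⁻¹| := by
        rw [hsplit, ← abs_mul]
        exact abs_add_le _ _
    _ ≤ 1 + |b - c| * c⁻¹ := by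
        rw [abs_one]
        gcongr
        exact abs_inv_add_le_inv hx hc

lemma mul_sq_div_add_eq {x b c : ℝ} (h : x + c ≠ 0) :
    x * ((x + b) / (x + c)) ^ 2 =
      x + (2 * b - c) + (b - c) ^ 2 / (x + c) - c * ((x + b) / (x + c)) ^ 2 := by
  field_simp
  ring

section WeightedIntegrals

variable {α : Type*} [MeasurableSpace α] {μ : Measure α} {ε w : α → ℝ} {b c : ℝ}

lemma integrable_div_add (hε : AEMeasurable ε μ) (hε0 : ∀ᵐ k ∂μ, 0 ≤ ε k) (hc : 0 < c)
    (hw : Integrable w μ) : Integrable (fun k => w k / (ε k + c)) μ := by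
  simp only [div_eq_mul_inv]
  refine hw.mul_bdd (c := c⁻¹) (hε.add_const c).inv.aestronglyMeasurable ?_
  filter_upwards [hε0] with k hk
  exact abs_inv_add_le_inv hk hc

lemma integrable_sq_div_add_mul (hε : AEMeasurable ε μ) (hε0 : ∀ᵐ k ∂μ, 0 ≤ ε k)
    (hc : 0 < c) (hw : Integrable w μ) :
    Integrable (fun k => ((ε k + b) / (ε k + c)) ^ 2 * w k) μ := by
  refine hw.bdd_mul (c := (1 + |b - c| * c⁻¹) ^ 2)
    (((hε.add_const b).div (hε.add_const c)).pow_const 2).aestronglyMeasurable ?_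
  filter_upwards [hε0] with k hk
  rw [norm_pow, Real.norm_eq_abs]
  gcongr
  exact abs_add_div_add_le hk hc

lemma mul_sq_div_add_mul_ae_eq (hε0 : ∀ᵐ k ∂μ, 0 ≤ ε k) (hc : 0 < c) :
    (fun k => ε k * ((ε k + b) / (ε k + c)) ^ 2 * w k) =ᵐ[μ] fun k =>
      ε k * w k + (2 * b - c) * w k + (b - c) ^ 2 * (w k / (ε k + c))
        - c * (((ε k + b) / (ε k + c)) ^ 2 * w k) := by
  filter_upwards [hε0] with k hk
  rw [mul_sq_div_add_eq (by positivity : ε k + c ≠ 0)]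
  ring

variable (hε : AEMeasurable ε μ) (hε0 : ∀ᵐ k ∂μ, 0 ≤ ε k) (hc : 0 < c)
  (hw : Integrable w μ) (hεw : Integrable (fun k => ε k * w k) μ)
include hε hε0 hc hw hεw

lemma integrable_mul_sq_div_add_mul :
    Integrable (fun k => ε k * ((ε k + b) / (ε k + c)) ^ 2 * w k) μ := by
  refine Integrable.congr ?_ (mul_sq_div_add_mul_ae_eq hε0 hc).symm
  exact Integrable.sub' ((hεw.fun_add (hw.const_mul _)).fun_add
    ((integrable_div_add hε hε0 hc hw).const_mul _))
    ((integrable_sq_div_add_mul hε hε0 hc hw).const_mul _)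

lemma integral_mul_sq_div_add_mul :
    ∫ k, ε k * ((ε k + b) / (ε k + c)) ^ 2 * w k ∂μ =
      (∫ k, ε k * w k ∂μ) + (2 * b - c) * (∫ k, w k ∂μ)
        + (b - c) ^ 2 * (∫ k, w k / (ε k + c) ∂μ)
        - c * ∫ k, ((ε k + b) / (ε k + c)) ^ 2 * w k ∂μ := by
  have hw' := hw.const_mul (2 * b - c)
  have hdiv := (integrable_div_add hε hε0 hc hw).const_mul ((b - c) ^ 2)
  have hsq := (integrable_sq_div_add_mul (b := b) hε hε0 hc hw).const_mul c
  rw [integral_congr_ae (mul_sq_div_add_mul_ae_eq hε0 hc),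
    integral_sub ((hεw.fun_add hw').fun_add hdiv) hsq, integral_add (hεw.fun_add hw') hdiv,
    integral_add hεw hw', integral_const_mul, integral_const_mul, integral_const_mul]

end WeightedIntegrals

theorem anderson_Gamma2_formula_general {d : ℕ}
    (ε : EuclideanSpace ℝ (Fin d) → ℝ) (hε : Measurable ε)
    (hε0 : ∀ᵐ k ∂volume, 0 ≤ ε k)
    (f₁ : EuclideanSpace ℝ (Fin d) → ℂ) (hf₁ : MemLp f₁ 2 volume)
    (hf₁norm : ∫ k, ‖f₁ k‖ ^ 2 = 1)
    (μ₁ μ₂ ω C₆ : ℝ) (hμ₂ : 0 < μ₂)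
    (f₂ : EuclideanSpace ℝ (Fin d) → ℂ)
    (hf₂ : ∀ k, f₂ k =
      ((-ω * C₆ * ((ε k + μ₁) / (ε k + μ₂)) : ℝ) : ℂ) * f₁ k)
    (hΓ₁ : Integrable (fun k => ε k * ‖f₁ k‖ ^ 2) volume)
    (hconstraint :
      (1 : ℝ) = -C₆ * (1 - (μ₂ - μ₁) * ∫ k, ‖f₁ k‖ ^ 2 / (ε k + μ₂)))
    (hf₂norm : ∫ k, ‖f₂ k‖ ^ 2 = 1) :
    Integrable (fun k => ε k * ‖f₂ k‖ ^ 2) volume ∧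
      ∫ k, ε k * ‖f₂ k‖ ^ 2 =
        ω ^ 2 * C₆ * (C₆ * ((∫ k, ε k * ‖f₁ k‖ ^ 2) + μ₁) + μ₂ - μ₁) - μ₂ := by
  have hw : Integrable (fun k => ‖f₁ k‖ ^ 2) volume :=
    (memLp_two_iff_integrable_sq_norm hf₁.1).mp hf₁
  have hnorm : ∀ k, ‖f₂ k‖ ^ 2 =
      (ω * C₆) ^ 2 * (((ε k + μ₁) / (ε k + μ₂)) ^ 2 * ‖f₁ k‖ ^ 2) := fun k => by
    rw [hf₂ k, norm_mul, Complex.norm_real, Real.norm_eq_abs, mul_pow, sq_abs]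
    ring
  have henergy : (fun k => ε k * ‖f₂ k‖ ^ 2) = fun k =>
      (ω * C₆) ^ 2 * (ε k * ((ε k + μ₁) / (ε k + μ₂)) ^ 2 * ‖f₁ k‖ ^ 2) := funext fun k => by
    rw [hnorm k]
    ring
  simp only [hnorm, integral_const_mul] at hf₂norm
  refine ⟨henergy ▸ (integrable_mul_sq_div_add_mul hε.aemeasurable hε0 hμ₂ hw hΓ₁).const_mul _, ?_⟩
  rw [henergy, integral_const_mul,
    integral_mul_sq_div_add_mul hε.aemeasurable hε0 hμ₂ hw hΓ₁, hf₁norm]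
  linear_combination (ω ^ 2 * C₆ * (μ₁ - μ₂)) * hconstraint - μ₂ * hf₂norm

/-- Let `μ₂ > 0`, `μ₁ ∈ ℝ`, `ω ≠ 0`, `C₆ ≠ 0`, and
`f₂ k = −ω·C₆·((ε k+μ₁)/(ε k+μ₂))·f₁ k`. Assume `Γ₁ := ∫ ε k·|f₁ k|² dk < ∞`, the
constraint `1 = −C₆·(1 − (μ₂−μ₁)·∫|f₁ k|²/(ε k+μ₂) dk)`, and `∫|f₂ k|² dk = 1`.
Then `Γ₂ := ∫ ε k·|f₂ k|² dk` is finite and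
`Γ₂ = ω²·C₆·(C₆·(Γ₁+μ₁) + μ₂ − μ₁) − μ₂`. -/
theorem anderson_Gamma2_formula {d : ℕ} (hd : 0 < d)
    (ε : EuclideanSpace ℝ (Fin d) → ℝ) (hε : Measurable ε)
    (hε0 : ∀ᵐ k ∂volume, 0 ≤ ε k)
    (f₁ : EuclideanSpace ℝ (Fin d) → ℂ) (hf₁ : MemLp f₁ 2 volume)
    (hf₁norm : ∫ k, ‖f₁ k‖ ^ 2 = 1)
    (μ₁ μ₂ ω C₆ : ℝ) (hμ₂ : 0 < μ₂) (hω : ω ≠ 0) (hC₆ : C₆ ≠ 0)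
    (f₂ : EuclideanSpace ℝ (Fin d) → ℂ)
    (hf₂ : ∀ k, f₂ k =
      ((-ω * C₆ * ((ε k + μ₁) / (ε k + μ₂)) : ℝ) : ℂ) * f₁ k)
    (hΓ₁ : Integrable (fun k => ε k * ‖f₁ k‖ ^ 2) volume)
    (hconstraint :
      (1 : ℝ) = -C₆ * (1 - (μ₂ - μ₁) * ∫ k, ‖f₁ k‖ ^ 2 / (ε k + μ₂)))
    (hf₂norm : ∫ k, ‖f₂ k‖ ^ 2 = 1) :
    Integrable (fun k => ε k * ‖f₂ k‖ ^ 2) volume ∧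
      ∫ k, ε k * ‖f₂ k‖ ^ 2 =
        ω ^ 2 * C₆ * (C₆ * ((∫ k, ε k * ‖f₁ k‖ ^ 2) + μ₁) + μ₂ - μ₁) - μ₂ :=
  anderson_Gamma2_formula_general ε hε hε0 f₁ hf₁ hf₁norm μ₁ μ₂ ω C₆ hμ₂ f₂ hf₂ hΓ₁ hconstraint
    hf₂norm
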